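/- The three cones C⁺ = {θ : (θ, w₀α_i) ≥ 0 for all i ∈ I}, C⁻ = −C⁺, and C⁰ = {θ : (θ, α_i) ≥ 0 for i ∈ I_f, (θ, δ) = 0} represent distinct W-orbits of maximal chambers: no element of W maps C⁺ onto C⁻ or onto C⁰, and the stabilizer of C⁰ in W = W_f ⋉ Q̌_f contains the translation lattice {1} ⋉ Q̌_f. -/

import Mathlib

/-!
The imaginary root `δ = ∑ r_i (w₀α_i)` with all `r_i > 0` is `W`-invariant, positive at a strictly
dominant coweight `θ₀ ∈ C⁺`, nonpositive on `C⁻` and zero on `C⁰`. Hence `w θ₀` lies in neither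
`C⁻` nor `C⁰`. The translations `ℓ_λ̌` fix `{(θ, δ) = 0} ⊇ C⁰` pointwise.
-/

section PositiveCombination

variable {V ι : Type*} [AddCommGroup V] [Module ℝ V] [Fintype ι]
  {r : ι → ℝ} {β : ι → V →ₗ[ℝ] ℝ} {θ : V}

lemma sum_smul_apply_pos [Nonempty ι] (hr : ∀ i, 0 < r i) (hθ : ∀ i, 0 < β i θ) :
    0 < (∑ i, r i • β i) θ := by
  simp only [LinearMap.coe_sum, Finset.sum_apply, LinearMap.smul_apply, smul_eq_mul]
  exact Finset.sum_pos (fun i _ => mul_pos (hr i) (hθ i)) Finset.univ_nonempty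

lemma sum_smul_apply_nonpos (hr : ∀ i, 0 ≤ r i) (hθ : ∀ i, β i θ ≤ 0) :
    (∑ i, r i • β i) θ ≤ 0 := by
  simp only [LinearMap.coe_sum, Finset.sum_apply, LinearMap.smul_apply, smul_eq_mul]
  exact Finset.sum_nonpos fun i _ => mul_nonpos_of_nonneg_of_nonpos (hr i) (hθ i)

end PositiveCombination

lemma image_ne_of_invariant_pos {V : Type*} {f : V → ℝ} {w : V → V}
    (hw : ∀ θ, f (w θ) = f θ) {A B : Set V} {x : V} (hxA : x ∈ A) (hfx : 0 < f x)
    (hB : ∀ y ∈ B, f y ≤ 0) : w '' A ≠ B := by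
  rintro rfl
  have := hB (w x) (Set.mem_image_of_mem w hxA)
  rw [hw] at this
  linarith

/-- Let `W` be the affine Weyl group acting on the real coweight space `V`,
preserving the pairing with the imaginary root `δ = ∑ r_i (w₀ α_i)` (all `r_i > 0`).
Consider the chambers
`C⁺ = {θ | (θ, w₀α_i) ≥ 0 ∀ i}`, `C⁻ = {θ | (θ, w₀α_i) ≤ 0 ∀ i}`, and
`C⁰ = {θ | (θ, α_i) ≥ 0 for i ∈ I_f, (θ, δ) = 0}`.
Assuming a strictly dominant coweight exists, these represent distinct orbits:
no `w ∈ W` maps `C⁺` onto `C⁻` or onto `C⁰`; and the translations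
`ℓ_λ̌ : θ ↦ θ + (θ,δ)·λ̌` (in particular those by the finite coroot lattice) stabilize
`C⁰`. -/
theorem stmt5 {V : Type*} [AddCommGroup V] [Module ℝ V]
    {I : Type*} [Fintype I] [Nonempty I]
    (β : I → (V →ₗ[ℝ] ℝ))      -- θ ↦ (θ, w₀ α_i)
    (αf : I → (V →ₗ[ℝ] ℝ)) (If : Set I)   -- θ ↦ (θ, α_i), finite vertices
    (r : I → ℝ) (hr : ∀ i, 0 < r i)
    (δf : V →ₗ[ℝ] ℝ) (hδ : δf = ∑ i, r i • β i)
    (W : Subgroup (V ≃ₗ[ℝ] V))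
    (hWδ : ∀ w ∈ W, ∀ θ : V, δf (w θ) = δf θ)
    (hex : ∃ θ : V, ∀ i, 0 < β i θ) :
    let Cp : Set V := {θ | ∀ i, 0 ≤ β i θ}
    let Cm : Set V := {θ | ∀ i, β i θ ≤ 0}
    let C0 : Set V := {θ | (∀ i ∈ If, 0 ≤ αf i θ) ∧ δf θ = 0}
    (∀ w ∈ W, ⇑w '' Cp ≠ Cm) ∧
    (∀ w ∈ W, ⇑w '' Cp ≠ C0) ∧
    (∀ lam : V, (fun θ => θ + δf θ • lam) '' C0 = C0) := by
  intro Cp Cm C0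
  obtain ⟨θ₀, hθ₀⟩ := hex
  have hθ₀Cp : θ₀ ∈ Cp := fun i => (hθ₀ i).le
  have hδθ₀ : 0 < δf θ₀ := hδ ▸ sum_smul_apply_pos hr hθ₀
  refine ⟨fun w hw => ?_, fun w hw => ?_, fun lam => ?_⟩
  · exact image_ne_of_invariant_pos (hWδ w hw) hθ₀Cp hδθ₀
      fun θ hθ => hδ ▸ sum_smul_apply_nonpos (fun i => (hr i).le) hθ
  · exact image_ne_of_invariant_pos (hWδ w hw) hθ₀Cp hδθ₀ fun θ hθ => hθ.2.le
  · exact Set.EqOn.image_eq_self fun θ hθ => by simp [hθ.2]
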